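/- The fermionic Stirling numbers satisfy the following special values: for all n ≥ 1, S_f(n,n) = (−1)^{n(n−1)/2} and s_f(n,n) = (−1)^{n(n−1)/2}; for all n ≥ 1, S_f(n,1) = 1; for all n ≥ 2, S_f(n,2) = −1; for all n ≥ 3, S_f(n,3) = 2 − n; and for all n ≥ 4, S_f(n,4) = n − 3. -/
import Mathlib


open Finset

/-- `ε_n = (1 - (-1)^n)/2`, so `ε_n = 0` for even `n` and `ε_n = 1` for odd `n`. -/
def eps (n : ℕ) : ℤ := (1 - (-1 : ℤ) ^ n) / 2

/-- The fermionic Stirling numbers of the first kind, defined by the recurrence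
`s_f(n+1,k) = (-1)^n s_f(n,k-1) + (-1)^{n+1} ε_n s_f(n,k)`, with `s_f(0,0) = 1`,
`s_f(n,0) = 0` for `n ≥ 1`, and `s_f(n,k) = 0` for `k > n`. -/
def sf : ℕ → ℕ → ℤ
  | 0, 0 => 1
  | 0, _ + 1 => 0
  | _ + 1, 0 => 0
  | n + 1, k + 1 => (-1 : ℤ) ^ n * sf n k + (-1 : ℤ) ^ (n + 1) * eps n * sf n (k + 1)

/-- The fermionic Stirling numbers of the second kind, defined by the recurrence
`S_f(n+1,k) = (-1)^{k-1} S_f(n,k-1) + ε_k S_f(n,k)`, with `S_f(0,0) = 1`,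
`S_f(n,0) = 0` for `n ≥ 1`, and `S_f(n,k) = 0` for `k > n`. -/
def Sf : ℕ → ℕ → ℤ
  | 0, 0 => 1
  | 0, _ + 1 => 0
  | _ + 1, 0 => 0
  | n + 1, k + 1 => (-1 : ℤ) ^ k * Sf n k + eps (k + 1) * Sf n (k + 1)

lemma Sf_zero : ∀ n k, n < k → Sf n k = 0 := by
  intro n
  induction n with
  | zero => intro k hk; match k, hk with | j+1, _ => rfl
  | succ m ih =>
    intro k hk
    match k, hk with
    | j+1, hk =>
      show (-1 : ℤ) ^ j * Sf m j + eps (j + 1) * Sf m (j + 1) = 0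
      rw [ih j (by omega), ih (j+1) (by omega)]; ring

lemma sf_zero : ∀ n k, n < k → sf n k = 0 := by
  intro n
  induction n with
  | zero => intro k hk; match k, hk with | j+1, _ => rfl
  | succ m ih =>
    intro k hk
    match k, hk with
    | j+1, hk =>
      show (-1 : ℤ) ^ m * sf m j + (-1 : ℤ) ^ (m + 1) * eps m * sf m (j + 1) = 0
      rw [ih j (by omega), ih (j+1) (by omega)]; ring

lemma tri_step (n : ℕ) : (n+1) * n / 2 = n * (n - 1) / 2 + n := by
  cases n with
  | zero => rfl
  | succ m =>
    have he : Even ((m+1) * m) := by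
      rw [Nat.mul_comm]; exact Nat.even_mul_succ_self m
    obtain ⟨c, hc⟩ := he
    have h1 : (m+1+1) * (m+1) = (m+1) * m + 2 * (m+1) := by ring
    simp only [Nat.succ_sub_one]
    rw [h1]
    omega

lemma Sf_diag : ∀ n, Sf n n = (-1 : ℤ) ^ (n * (n - 1) / 2) := by
  intro n
  induction n with
  | zero => rfl
  | succ m ih =>
    show (-1 : ℤ) ^ m * Sf m m + eps (m + 1) * Sf m (m + 1) = _
    rw [Sf_zero m (m+1) (by omega), ih]
    have h := tri_step m
    simp only [Nat.add_sub_cancel]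
    rw [h, pow_add]; ring

lemma sf_diag : ∀ n, sf n n = (-1 : ℤ) ^ (n * (n - 1) / 2) := by
  intro n
  induction n with
  | zero => rfl
  | succ m ih =>
    show (-1 : ℤ) ^ m * sf m m + (-1 : ℤ) ^ (m+1) * eps m * sf m (m + 1) = _
    rw [sf_zero m (m+1) (by omega), ih]
    have h := tri_step m
    simp only [Nat.add_sub_cancel]
    rw [h, pow_add]; ring

lemma Sf_zero_col (n : ℕ) (h : 1 ≤ n) : Sf n 0 = 0 := by
  match n, h with | m+1, _ => rfl

lemma Sf_col1 : ∀ n, 1 ≤ n → Sf n 1 = 1 := by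
  intro n
  induction n with
  | zero => omega
  | succ m ih =>
    intro _
    show (-1 : ℤ) ^ 0 * Sf m 0 + eps 1 * Sf m 1 = 1
    rcases Nat.eq_zero_or_pos m with rfl | hm
    · norm_num [Sf, eps]
    · rw [Sf_zero_col m hm, ih hm]; norm_num [eps]

lemma Sf_col2 : ∀ n, 2 ≤ n → Sf n 2 = -1 := by
  intro n hn
  match n, hn with
  | m+1, hn =>
    show (-1 : ℤ) ^ 1 * Sf m 1 + eps 2 * Sf m 2 = -1
    rw [Sf_col1 m (by omega)]
    norm_num [eps]

lemma Sf_col3 : ∀ n, 3 ≤ n → Sf n 3 = 2 - (n : ℤ) := by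
  intro n
  induction n with
  | zero => omega
  | succ m ih =>
    intro hn
    show (-1 : ℤ) ^ 2 * Sf m 2 + eps 3 * Sf m 3 = 2 - ((m : ℤ) + 1)
    rcases Nat.lt_or_ge m 3 with hm | hm
    · interval_cases m
      · omega
      · omega
      · rw [Sf_col2 2 le_rfl, Sf_zero 2 3 (by omega)]
        push_cast; norm_num [eps]
    · rw [Sf_col2 m (by omega), ih hm]
      push_cast; norm_num [eps]; ring

lemma Sf_col4 : ∀ n, 4 ≤ n → Sf n 4 = (n : ℤ) - 3 := by
  intro n hn
  match n, hn with
  | m+1, hn =>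
    show (-1 : ℤ) ^ 3 * Sf m 3 + eps 4 * Sf m 4 = ((m : ℤ) + 1) - 3
    rw [Sf_col3 m (by omega)]
    push_cast; norm_num [eps]; ring

theorem fermionic_stirling_special_values :
    (∀ n : ℕ, 1 ≤ n → Sf n n = (-1 : ℤ) ^ (n * (n - 1) / 2)) ∧
    (∀ n : ℕ, 1 ≤ n → sf n n = (-1 : ℤ) ^ (n * (n - 1) / 2)) ∧
    (∀ n : ℕ, 1 ≤ n → Sf n 1 = 1) ∧
    (∀ n : ℕ, 2 ≤ n → Sf n 2 = -1) ∧
    (∀ n : ℕ, 3 ≤ n → Sf n 3 = 2 - (n : ℤ)) ∧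
    (∀ n : ℕ, 4 ≤ n → Sf n 4 = (n : ℤ) - 3) := by
  exact ⟨fun n _ => Sf_diag n, fun n _ => sf_diag n, Sf_col1, Sf_col2, Sf_col3, Sf_col4⟩
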